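/- (Scoped-Satisfaction) For any assignment σ, refinement variable κ, and constraint c: if σ ⊨ c then σ ⊨ scope(κ,c). -/

import Mathlib

set_option autoImplicit false

namespace LRT

/- Variable names: a countable type. -/
abbrev Name : Type := ℕ

/- Environments map variable names to values. -/
abbrev Env (Val : Type) : Type := Name → Val

/-- Refinement variables: an identifier together with a list of formal
parameters; the arity of the variable is the length of `formals`. -/
structure KVar : Type where
  id : ℕ
  formals : List Name
deriving DecidableEq

/-- Predicates: refinements (semantic predicates over environments),
applications of refinement variables to variable names, and conjunctions;
we additionally include the syntactic `true` predicate as well as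
disjunctions, existential quantification and implication, which are needed
to express strongest solutions and the statements of the lemmas. -/
inductive Pred (Val Base : Type) : Type where
  | tt   : Pred Val Base
  | ref  : (Env Val → Prop) → Pred Val Base
  | kapp : KVar → List Name → Pred Val Base
  | conj : Pred Val Base → Pred Val Base → Pred Val Base
  | disj : Pred Val Base → Pred Val Base → Pred Val Base
  | exis : Name → Base → Pred Val Base → Pred Val Base
  | impl : Pred Val Base → Pred Val Base → Pred Val Base

/-- NNF constraints: predicates, conjunctions, and implications
`∀ x : b. p ⇒ c` binding a variable of a base sort under a hypothesis. -/
inductive Cstr (Val Base : Type) : Type where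
  | pred : Pred Val Base → Cstr Val Base
  | conj : Cstr Val Base → Cstr Val Base → Cstr Val Base
  | all  : Name → Base → Pred Val Base → Cstr Val Base → Cstr Val Base

variable {Val Base : Type}

/-- Environment update. -/
def Env.upd (env : Env Val) (x : Name) (v : Val) : Env Val :=
  fun n => if n = x then v else env n

/-- The renaming substituting formals by actuals (identity elsewhere). -/
def renameWith (formals actuals : List Name) : Name → Name :=
  fun n => ((formals.zip actuals).lookup n).getD n

/-- Renaming the (free) variables of a predicate. -/
def Pred.rename (f : Name → Name) : Pred Val Base → Pred Val Base
  | .tt => .tt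
  | .ref r => .ref (fun env => r (fun n => env (f n)))
  | .kapp k ys => .kapp k (ys.map f)
  | .conj p q => .conj (p.rename f) (q.rename f)
  | .disj p q => .disj (p.rename f) (q.rename f)
  | .exis x b p => .exis (f x) b (p.rename f)
  | .impl p q => .impl (p.rename f) (q.rename f)

/-- (Partial) assignments map refinement variables to predicates over their
formal parameters; `none` means the variable is not in the domain. -/
abbrev Assignment (Val Base : Type) : Type := KVar → Option (Pred Val Base)

/-- The domain of an assignment. -/
def Assignment.domain (σ : Assignment Val Base) : Set KVar :=
  {k | (σ k).isSome}

/-- Applying an assignment to a predicate: each application `κ(ȳ)` with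
`κ` in the domain is replaced by `σ(κ)` with formals substituted by `ȳ`. -/
def Pred.subst (σ : Assignment Val Base) : Pred Val Base → Pred Val Base
  | .tt => .tt
  | .ref r => .ref r
  | .kapp k ys =>
      match σ k with
      | some p => p.rename (renameWith k.formals ys)
      | none => .kapp k ys
  | .conj p q => .conj (p.subst σ) (q.subst σ)
  | .disj p q => .disj (p.subst σ) (q.subst σ)
  | .exis x b p => .exis x b (p.subst σ)
  | .impl p q => .impl (p.subst σ) (q.subst σ)

/-- Applying an assignment to a constraint. -/
def Cstr.subst (σ : Assignment Val Base) : Cstr Val Base → Cstr Val Base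
  | .pred p => .pred (p.subst σ)
  | .conj c1 c2 => .conj (c1.subst σ) (c2.subst σ)
  | .all x b p c => .all x b (p.subst σ) (c.subst σ)

/-- Composition of assignments: `(σ ∘ σ′)(κ) = σ(σ′(κ))`. -/
def Assignment.comp (σ σ' : Assignment Val Base) : Assignment Val Base :=
  fun k =>
    match σ' k with
    | some p => some (p.subst σ)
    | none => σ k

/-- Does the refinement variable `k` occur in a predicate? -/
def Pred.hasK (k : KVar) : Pred Val Base → Bool
  | .tt => false
  | .ref _ => false
  | .kapp k' _ => decide (k' = k)
  | .conj p q => p.hasK k || q.hasK k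
  | .disj p q => p.hasK k || q.hasK k
  | .exis _ _ p => p.hasK k
  | .impl p q => p.hasK k || q.hasK k

/-- A predicate contains no refinement-variable applications. -/
def Pred.noK : Pred Val Base → Prop
  | .tt => True
  | .ref _ => True
  | .kapp _ _ => False
  | .conj p q => p.noK ∧ q.noK
  | .disj p q => p.noK ∧ q.noK
  | .exis _ _ p => p.noK
  | .impl p q => p.noK ∧ q.noK

/-- Does the refinement variable `k` occur in a constraint? -/
def Cstr.hasK (k : KVar) : Cstr Val Base → Bool
  | .pred p => p.hasK k
  | .conj c1 c2 => c1.hasK k || c2.hasK k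
  | .all _ _ p c => p.hasK k || c.hasK k

/-- A verification condition: a constraint with no refinement-variable
applications. -/
def Cstr.isVC : Cstr Val Base → Prop
  | .pred p => p.noK
  | .conj c1 c2 => c1.isVC ∧ c2.isVC
  | .all _ _ p c => p.noK ∧ c.isVC

/-- A (semantic) refinement reads only the variables in `S`. -/
def RefDependsOn (r : Env Val → Prop) (S : Set Name) : Prop :=
  ∀ env env' : Env Val, (∀ n ∈ S, env n = env' n) → (r env ↔ r env')

/-- Well-scopedness of a predicate w.r.t. a set of bound variables:
each refinement reads only bound variables. -/
def Pred.wsc (S : Set Name) : Pred Val Base → Prop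
  | .tt => True
  | .ref r => RefDependsOn r S
  | .kapp _ _ => True
  | .conj p q => p.wsc S ∧ q.wsc S
  | .disj p q => p.wsc S ∧ q.wsc S
  | .exis x _ p => p.wsc (insert x S)
  | .impl p q => p.wsc S ∧ q.wsc S

/-- Well-scopedness of a constraint. -/
def Cstr.wf (S : Set Name) : Cstr Val Base → Prop
  | .pred p => p.wsc S
  | .conj c1 c2 => c1.wf S ∧ c2.wf S
  | .all x _ p c => p.wsc (insert x S) ∧ c.wf (insert x S)

/-- Semantics of predicates in an environment (given the sort of each value). -/
def Pred.holds (sortOf : Val → Base) (env : Env Val) : Pred Val Base → Prop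
  | .tt => True
  | .ref r => r env
  | .kapp _ _ => True
  | .conj p q => p.holds sortOf env ∧ q.holds sortOf env
  | .disj p q => p.holds sortOf env ∨ q.holds sortOf env
  | .exis x b p => ∃ v : Val, sortOf v = b ∧ p.holds sortOf (Env.upd env x v)
  | .impl p q => p.holds sortOf env → q.holds sortOf env

/-- Semantics of constraints in an environment. -/
def Cstr.holds (sortOf : Val → Base) (env : Env Val) : Cstr Val Base → Prop
  | .pred p => p.holds sortOf env
  | .conj c1 c2 => c1.holds sortOf env ∧ c2.holds sortOf env
  | .all x b p c =>
      ∀ v : Val, sortOf v = b → p.holds sortOf (Env.upd env x v) →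
        c.holds sortOf (Env.upd env x v)

/-- Validity: holds in every environment. -/
def Cstr.valid (sortOf : Val → Base) (c : Cstr Val Base) : Prop :=
  ∀ env : Env Val, c.holds sortOf env

/-- `σ ⊨ c` : `σ(c)` is a well-scoped, valid VC. -/
def Sat (sortOf : Val → Base) (σ : Assignment Val Base) (c : Cstr Val Base) : Prop :=
  (c.subst σ).isVC ∧ (c.subst σ).wf ∅ ∧ (c.subst σ).valid sortOf

/-- Satisfaction of a set of constraints. -/
def SatSet (sortOf : Val → Base) (σ : Assignment Val Base)
    (C : Set (Cstr Val Base)) : Prop :=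
  ∀ c ∈ C, Sat sortOf σ c

/-- A constraint is satisfiable if some assignment satisfies it. -/
def Satisfiable (sortOf : Val → Base) (c : Cstr Val Base) : Prop :=
  ∃ σ : Assignment Val Base, Sat sortOf σ c

/-- A binder `x : b : p` of an assumption context. -/
structure Bind (Val Base : Type) : Type where
  name : Name
  base : Base
  hyp : Pred Val Base

/-- Wrapping a constraint in a binder prefix `∀x₁:b₁. p₁ ⇒ … ⇒ ∀xₙ:bₙ. pₙ ⇒ ·`. -/
def wrap (bs : List (Bind Val Base)) (c : Cstr Val Base) : Cstr Val Base :=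
  bs.foldr (fun b acc => .all b.name b.base b.hyp acc) c

/-- The assumption context `Σ = σ, x₁:b₁:p₁, …, xₙ:bₙ:pₙ` satisfies `c` iff
`σ ⊨ ∀x₁:b₁. p₁ ⇒ … ⇒ ∀xₙ:bₙ. pₙ ⇒ c`. -/
def CtxSat (sortOf : Val → Base) (σ : Assignment Val Base)
    (bs : List (Bind Val Base)) (c : Cstr Val Base) : Prop :=
  Sat sortOf σ (wrap bs c)

/-- Flattening a constraint into a set of flat constraints. -/
def Cstr.flat : Cstr Val Base → Set (Cstr Val Base)
  | .pred .tt => ∅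
  | .pred p => {.pred p}
  | .conj c1 c2 => c1.flat ∪ c2.flat
  | .all x b p c => (Cstr.all x b p) '' c.flat

/-- The head (rightmost consequent) of a flat constraint. -/
def Cstr.headP : Cstr Val Base → Pred Val Base
  | .pred p => p
  | .conj c1 _ => c1.headP
  | .all _ _ _ c => c.headP

/-- The body (set of antecedents) of a flat constraint. -/
def Cstr.bodyP : Cstr Val Base → Set (Pred Val Base)
  | .pred _ => ∅
  | .conj c1 _ => c1.bodyP
  | .all _ _ p c => insert p c.bodyP

/-- `defs(c,κ)`: the flat constraints of `c` whose head contains `κ`. -/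
def defs (c : Cstr Val Base) (k : KVar) : Set (Cstr Val Base) :=
  {c' | c' ∈ c.flat ∧ c'.headP.hasK k = true}

/-- `uses(c,κ)`: the flat constraints of `c` whose head does not contain `κ`. -/
def uses (c : Cstr Val Base) (k : KVar) : Set (Cstr Val Base) :=
  {c' | c' ∈ c.flat ∧ ¬ c'.headP.hasK k = true}

/-- `κ` is acyclic in `c`: no flat constraint of `c` contains `κ` both in
its head and in its body. -/
def Acyclic1 (k : KVar) (c : Cstr Val Base) : Prop :=
  ∀ c' ∈ c.flat,
    ¬ (c'.headP.hasK k = true ∧ ∃ p ∈ c'.bodyP, p.hasK k = true)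

/-- The scope of `κ` in `c`. -/
def Cstr.scope (k : KVar) : Cstr Val Base → Cstr Val Base
  | .conj c1 c2 =>
      if c1.hasK k && !c2.hasK k then c1.scope k
      else if c2.hasK k && !c1.hasK k then c2.scope k
      else .conj c1 c2
  | .all x b p c =>
      if p.hasK k then .all x b p c
      else .all x b p (c.scope k)
  | .pred p => .pred p

/-- The body of the scope of `κ` in `c`: the constraint `c′` such that
`scope(κ,c) = ∀x₁:b₁.p₁ ⇒ … ⇒ ∀xₘ:bₘ.pₘ ⇒ c′` with `κ` not occurring in
any `pᵢ`. -/
def Cstr.scopeBody (k : KVar) : Cstr Val Base → Cstr Val Base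
  | .conj c1 c2 =>
      if c1.hasK k && !c2.hasK k then c1.scopeBody k
      else if c2.hasK k && !c1.hasK k then c2.scopeBody k
      else .conj c1 c2
  | .all x b p c =>
      if p.hasK k then .all x b p c
      else c.scopeBody k
  | .pred p => .pred p

/-- The refinement `⋀ᵢ xᵢ = yᵢ`. -/
def eqsPred (xs ys : List Name) : Pred Val Base :=
  .ref (fun env => ∀ q ∈ xs.zip ys, env q.1 = env q.2)

/-- Strongest-solution body on leaf predicates. -/
def solP (k : KVar) : Pred Val Base → Pred Val Base
  | .kapp k' ys =>
      if k' = k then eqsPred k.formals ys else .ref (fun _ => False)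
  | _ => .ref (fun _ => False)

/-- The strongest-solution body `sol(κ,c)`. -/
def solC (k : KVar) : Cstr Val Base → Pred Val Base
  | .pred p => solP k p
  | .conj c1 c2 => .disj (solC k c1) (solC k c2)
  | .all x b p c => .exis x b (.conj p (solC k c))

/-- The singleton assignment `[κ ↦ p]`. -/
def single (k : KVar) (p : Pred Val Base) : Assignment Val Base :=
  fun k' => if k' = k then some p else none

/-- The strongest solution `[κ ↦ λx̄. sol(κ,c)]`. -/
def strongestSol (k : KVar) (c : Cstr Val Base) : Assignment Val Base :=
  single k (solC k c)

/-- The strongest scoped solution `η(c,κ) = [κ ↦ λx̄. sol(κ, c′)]` where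
`c′` is the body of `scope(κ,c)`. -/
def eta (c : Cstr Val Base) (k : KVar) : Assignment Val Base :=
  single k (solC k (c.scopeBody k))

/-- The elimination procedure `elim1(σ,c)`. -/
def Cstr.elim1 (σ : Assignment Val Base) : Cstr Val Base → Cstr Val Base
  | .pred (.kapp k ys) =>
      if (σ k).isSome then .pred .tt else .pred (.kapp k ys)
  | .pred p => .pred p
  | .conj c1 c2 => .conj (c1.elim1 σ) (c2.elim1 σ)
  | .all x b p c => .all x b (p.subst σ) (c.elim1 σ)

/-- Single-variable elimination `elimK(κ,c) = elim1(η(c,κ), c)`. -/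
def elimK (k : KVar) (c : Cstr Val Base) : Cstr Val Base :=
  c.elim1 (eta c k)

/-- Multi-variable elimination. -/
def elimList : List KVar → Cstr Val Base → Cstr Val Base
  | [], c => c
  | k :: ks, c => elimList ks (elimK k c)

/-- The dependency relation of a constraint: `(κ,κ′)` such that some flat
constraint of `c` has `κ` in its body and `κ′` in its head. -/
def depRel (c : Cstr Val Base) (k k' : KVar) : Prop :=
  ∃ cf ∈ c.flat, (∃ p ∈ cf.bodyP, p.hasK k = true) ∧ cf.headP.hasK k' = true

/-- The dependency relation of an assignment: `(κ,κ′)` such that `κ` occurs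
in `σ(κ′)`. -/
def depA (σ : Assignment Val Base) (k k' : KVar) : Prop :=
  ∃ p, σ k' = some p ∧ p.hasK k = true

/-- Restriction of a relation to a set: remove all pairs involving variables
outside `K'`. -/
def restrictRel (K' : Set KVar) (r : KVar → KVar → Prop) : KVar → KVar → Prop :=
  fun a b => a ∈ K' ∧ b ∈ K' ∧ r a b

/-- A set `K'` of refinement variables is acyclic in `c` if the
reflexive–transitive closure of `dep(c)` restricted to `K'` is acyclic
(i.e., antisymmetric: it has no nontrivial cycles). -/
def AcyclicSet (K' : Set KVar) (c : Cstr Val Base) : Prop :=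
  ∀ a b : KVar,
    Relation.ReflTransGen (restrictRel K' (depRel c)) a b →
    Relation.ReflTransGen (restrictRel K' (depRel c)) b a → a = b

/-! `scope(κ, c)` keeps a prefix of the binders of `c` and discards conjuncts below them, so
`σ(scope(κ, c))` arises from `σ(c)` in the same way. Being a VC, being well-scoped and holding in an
environment all pass from a constraint to any such pruning of it. -/

inductive Cstr.IsPruning : Cstr Val Base → Cstr Val Base → Prop
  | refl (c : Cstr Val Base) : Cstr.IsPruning c c
  | conj_left {d c₁ : Cstr Val Base} (c₂ : Cstr Val Base) :
      Cstr.IsPruning d c₁ → Cstr.IsPruning d (.conj c₁ c₂)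
  | conj_right {d c₂ : Cstr Val Base} (c₁ : Cstr Val Base) :
      Cstr.IsPruning d c₂ → Cstr.IsPruning d (.conj c₁ c₂)
  | all (x : Name) (b : Base) (p : Pred Val Base) {d c : Cstr Val Base} :
      Cstr.IsPruning d c → Cstr.IsPruning (.all x b p d) (.all x b p c)

namespace Cstr

theorem isPruning_scope (k : KVar) (c : Cstr Val Base) : (c.scope k).IsPruning c := by
  induction c with
  | pred p => exact .refl _
  | conj c₁ c₂ ih₁ ih₂ =>
      rw [scope]
      split_ifs
      · exact .conj_left c₂ ih₁
      · exact .conj_right c₁ ih₂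
      · exact .refl _
  | all x b p c ih =>
      rw [scope]
      split_ifs
      · exact .refl _
      · exact .all x b p ih

namespace IsPruning

variable {d c : Cstr Val Base}

theorem subst (σ : Assignment Val Base) (h : d.IsPruning c) :
    (d.subst σ).IsPruning (c.subst σ) := by
  induction h with
  | refl c => exact .refl _
  | conj_left c₂ _ ih => exact .conj_left _ ih
  | conj_right c₁ _ ih => exact .conj_right _ ih
  | all x b p _ ih => exact .all x b _ ih

theorem isVC (h : d.IsPruning c) (hc : c.isVC) : d.isVC := by
  induction h with
  | refl => exact hc
  | conj_left _ _ ih => exact ih hc.1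
  | conj_right _ _ ih => exact ih hc.2
  | all _ _ _ _ ih => exact ⟨hc.1, ih hc.2⟩

theorem wf {S : Set Name} (h : d.IsPruning c) (hc : c.wf S) : d.wf S := by
  induction h generalizing S with
  | refl => exact hc
  | conj_left _ _ ih => exact ih hc.1
  | conj_right _ _ ih => exact ih hc.2
  | all _ _ _ _ ih => exact ⟨hc.1, ih hc.2⟩

theorem holds {sortOf : Val → Base} {env : Env Val} (h : d.IsPruning c)
    (hc : c.holds sortOf env) : d.holds sortOf env := by
  induction h generalizing env with
  | refl => exact hc
  | conj_left _ _ ih => exact ih hc.1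
  | conj_right _ _ ih => exact ih hc.2
  | all _ _ _ _ ih => exact fun v hv hp => ih (hc v hv hp)

theorem sat {sortOf : Val → Base} {σ : Assignment Val Base} (h : d.IsPruning c)
    (hc : Sat sortOf σ c) : Sat sortOf σ d :=
  have hσ := h.subst σ
  ⟨hσ.isVC hc.1, hσ.wf hc.2.1, fun env => hσ.holds (hc.2.2 env)⟩

end IsPruning

end Cstr

/-- Scoped-Satisfaction. -/
theorem scoped_satisfaction (Val Base : Type) (sortOf : Val → Base)
    (σ : Assignment Val Base) (k : KVar) (c : Cstr Val Base)
    (h : Sat sortOf σ c) :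
    Sat sortOf σ (c.scope k) :=
  (c.isPruning_scope k).sat h

end LRT
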